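/- arXiv:2601.10036 — 5 statements merged into one kernel-verified Lean document; each statement's English description precedes it below -/
import Mathlib

section
/- Let k1, k2 ≥ 0 be integers with k1 + k2 ≥ 1, let n = k1 + k2 + 3, and let T = DC(k1, k2, 3). Then λ₁(T) = √((n - 1 + √((k1-k2)² + 4))/2) and λ₂(T) = √((n - 1 - √((k1-k2)² + 4))/2). -/
open scoped Classical

/-- Adjacency matrix of a simple graph on `Fin n`, over `ℝ`. -/
noncomputable def adjMat {n : ℕ} (G : SimpleGraph (Fin n)) : Matrix (Fin n) (Fin n) ℝ :=
  fun i j => if G.Adj i j then 1 else 0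

/-- The eigenvalues (roots of the characteristic polynomial, with multiplicity)
of the adjacency matrix, sorted in nondecreasing order. -/
noncomputable def eigList {n : ℕ} (G : SimpleGraph (Fin n)) : List ℝ :=
  (Matrix.charpoly (adjMat G)).roots.sort (· ≤ ·)

/-- `lam k G` is the `k`-th largest adjacency eigenvalue of `G` (so `lam 1` is `λ₁`). -/
noncomputable def lam {n : ℕ} (k : ℕ) (G : SimpleGraph (Fin n)) : ℝ :=
  (eigList G).getD (n - k) 0

/-- The double comet `DC(k1, k2, l)`: a path on `l` vertices (the vertices `0, …, l-1`),
with `k1` pendant leaves attached to the terminal vertex `0` and `k2` pendant leaves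
attached to the terminal vertex `l - 1`. -/
def doubleComet (k1 k2 l : ℕ) : SimpleGraph (Fin (k1 + k2 + l)) :=
  SimpleGraph.fromRel (fun i j =>
    ((i : ℕ) + 1 = (j : ℕ) ∧ (j : ℕ) < l) ∨
    (l ≤ (i : ℕ) ∧ (i : ℕ) < l + k1 ∧ (j : ℕ) = 0) ∨
    (l + k1 ≤ (i : ℕ) ∧ (j : ℕ) = l - 1))

/-- Degree of a vertex. -/
noncomputable def deg {n : ℕ} (G : SimpleGraph (Fin n)) (u : Fin n) : ℕ :=
  (Finset.univ.filter (fun w => G.Adj u w)).card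

/-!
Order the vertices of `DC(k1, k2, 3)` as path, then pendant leaves: the adjacency matrix becomes
`[[P, B], [Bᵀ, 0]]` with `P` the path `P₃` and `B * Bᵀ = diag(k1, 0, k2)`. Multiplying
`X - [[P, B], [Bᵀ, 0]]` on the right by `[[X, 0], [Bᵀ, 1]]` makes it block upper triangular, so
`X³ χ = X^(k1+k2) det(X (X - P) - B Bᵀ) = X^(k1+k2+2) (X⁴ - (k1+k2+2) X² + k1 k2 + k1 + k2)`.
Writing the quartic as `(X² - μ)(X² - ν)` with `0 ≤ ν ≤ μ`, the spectrum consists of `±√μ`, `±√ν`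
and `k1 + k2 - 1` zeros, so the two largest eigenvalues are `√μ` and `√ν`.
-/

open Matrix Polynomial

theorem Multiset.sort_add_of_forall_le {α : Type*} [LinearOrder α] {s t : Multiset α}
    (h : ∀ x ∈ s, ∀ y ∈ t, x ≤ y) :
    (s + t).sort (· ≤ ·) = s.sort (· ≤ ·) ++ t.sort (· ≤ ·) := by
  refine List.Perm.eq_of_pairwise' (pairwise_sort _ _)
    (List.pairwise_append.2 ⟨pairwise_sort _ _, pairwise_sort _ _, by simpa using h⟩) ?_
  rw [← Multiset.coe_eq_coe, ← Multiset.coe_add, sort_eq, sort_eq, sort_eq]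

theorem Multiset.sort_pair {α : Type*} [LinearOrder α] {a b : α} (hab : a ≤ b) :
    ({a, b} : Multiset α).sort (· ≤ ·) = [a, b] := by
  rw [Multiset.insert_eq_cons, sort_cons _ _ _ (by simpa using hab), sort_singleton]

theorem X_pow_card_mul_charpoly_fromBlocks_zero₂₂ {R m p : Type*} [CommRing R] [Fintype m]
    [Fintype p] [DecidableEq m] [DecidableEq p] (A : Matrix m m R) (B : Matrix m p R)
    (D : Matrix p m R) :
    (X : R[X]) ^ Fintype.card m * (fromBlocks A B D 0).charpoly =
      X ^ Fintype.card p * ((X : R[X]) • charmatrix A - (B * D).map C).det := by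
  have hzero : charmatrix (0 : Matrix p p R) = (X : R[X]) • 1 := by
    ext i j
    by_cases h : i = j <;> simp [charmatrix, h]
  have hfactor : charmatrix (fromBlocks A B D 0) * fromBlocks ((X : R[X]) • 1) 0 (D.map C) 1 =
      fromBlocks ((X : R[X]) • charmatrix A - (B * D).map C) (-B.map C) 0 ((X : R[X]) • 1) := by
    rw [charmatrix_fromBlocks, fromBlocks_multiply, hzero]
    congr 1
    · rw [mul_smul_comm, mul_one, Matrix.map_mul, Matrix.neg_mul, ← sub_eq_add_neg]
    · simp
    · rw [Matrix.neg_mul, Matrix.mul_smul, Matrix.smul_mul, Matrix.mul_one, Matrix.one_mul,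
        neg_add_cancel]
    · simp
  have hdet := congrArg det hfactor
  rw [det_mul, det_fromBlocks_zero₁₂, det_fromBlocks_zero₂₁] at hdet
  simpa [charpoly, mul_comm] using hdet

theorem X_pow_four_sub_C_mul_X_sq_add_C {R : Type*} [CommRing R] {μ ν : R} :
    (X ^ 4 - C (μ + ν) * X ^ 2 + C (μ * ν) : R[X]) = (X ^ 2 - C μ) * (X ^ 2 - C ν) := by
  rw [C_add, C_mul]
  ring

theorem roots_X_sq_sub_C {μ : ℝ} (hμ : 0 ≤ μ) : (X ^ 2 - C μ).roots = {√μ, -√μ} := by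
  have hfactor : X ^ 2 - C μ = (X - C √μ) * (X - C (-√μ)) := by
    rw [C_neg, ← Real.sq_sqrt hμ, C_pow, Real.sqrt_sq (Real.sqrt_nonneg μ)]
    ring
  rw [hfactor, roots_mul (mul_ne_zero (X_sub_C_ne_zero _) (X_sub_C_ne_zero _)), roots_X_sub_C,
    roots_X_sub_C]
  rfl

theorem roots_X_pow_mul_X_sq_sub_C_mul_X_sq_sub_C {μ ν : ℝ} (j : ℕ) (hν : 0 ≤ ν)
    (hνμ : ν ≤ μ) :
    (X ^ j * ((X ^ 2 - C μ) * (X ^ 2 - C ν))).roots =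
      (j • {0} + {-√μ, -√ν}) + {√ν, √μ} := by
  have hne : ∀ c : ℝ, (X ^ 2 - C c) ≠ 0 := fun c => (monic_X_pow_sub_C c two_ne_zero).ne_zero
  rw [roots_mul (mul_ne_zero (pow_ne_zero _ X_ne_zero) (mul_ne_zero (hne μ) (hne ν))),
    roots_mul (mul_ne_zero (hne μ) (hne ν)), roots_X_pow, roots_X_sq_sub_C (hν.trans hνμ),
    roots_X_sq_sub_C hν]
  simp only [Multiset.insert_eq_cons, ← Multiset.singleton_add]
  abel

theorem lam_one_lam_two_of_roots {n : ℕ} (G : SimpleGraph (Fin n)) {s : Multiset ℝ} {a b : ℝ}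
    (hcard : Multiset.card s + 2 = n) (hroots : (adjMat G).charpoly.roots = s + {a, b})
    (hs : ∀ x ∈ s, x ≤ a) (hab : a ≤ b) : lam 1 G = b ∧ lam 2 G = a := by
  have hsort : eigList G = s.sort (· ≤ ·) ++ [a, b] := by
    rw [eigList, hroots, Multiset.sort_add_of_forall_le, Multiset.sort_pair hab]
    simp only [Multiset.insert_eq_cons, Multiset.mem_cons, Multiset.mem_singleton]
    rintro x hx y (rfl | rfl)
    exacts [hs x hx, (hs x hx).trans hab]
  simp [lam, hsort, ← hcard]

noncomputable def pathAdj (n : ℕ) : Matrix (Fin n) (Fin n) ℝ :=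
  of fun i j => if (i : ℕ) + 1 = j ∨ (j : ℕ) + 1 = i then 1 else 0

noncomputable def pendantIncidence (k1 k2 : ℕ) : Matrix (Fin 3) (Fin k1 ⊕ Fin k2) ℝ :=
  of fun i => Sum.elim (fun _ => if (i : ℕ) = 0 then 1 else 0)
    (fun _ => if (i : ℕ) = 2 then 1 else 0)

theorem pendantIncidence_mul_transpose (k1 k2 : ℕ) :
    pendantIncidence k1 k2 * (pendantIncidence k1 k2)ᵀ = diagonal ![(k1 : ℝ), 0, k2] := by
  ext i j
  fin_cases i <;> fin_cases j <;> simp [pendantIncidence, mul_apply, Fintype.sum_sum_type]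

theorem X_smul_charmatrix_pathAdj_three_sub_diagonal (c1 c2 : ℝ) :
    (X : ℝ[X]) • charmatrix (pathAdj 3) - (diagonal ![c1, 0, c2]).map C =
      !![X ^ 2 - C c1, -X, 0; -X, X ^ 2, -X; 0, -X, X ^ 2 - C c2] := by
  ext i j
  fin_cases i <;> fin_cases j <;> simp [pathAdj, sq]

theorem det_X_smul_charmatrix_pathAdj_three_sub_diagonal (c1 c2 : ℝ) :
    ((X : ℝ[X]) • charmatrix (pathAdj 3) - (diagonal ![c1, 0, c2]).map C).det =
      X ^ 2 * (X ^ 4 - C (c1 + c2 + 2) * X ^ 2 + C (c1 * c2 + c1 + c2)) := by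
  rw [X_smul_charmatrix_pathAdj_three_sub_diagonal, det_fin_three]
  simp only [of_apply, cons_val', cons_val_zero, empty_val', cons_val_fin_one, cons_val_one,
    cons_val_two, tail_cons, head_cons, head_fin_const, C_add, C_ofNat, C_mul]
  ring

def doubleCometThreeEquiv (k1 k2 : ℕ) : Fin 3 ⊕ (Fin k1 ⊕ Fin k2) ≃ Fin (k1 + k2 + 3) :=
  ((Equiv.sumCongr (Equiv.refl _) finSumFinEquiv).trans finSumFinEquiv).trans
    (finCongr (by omega))

@[simp]
theorem doubleCometThreeEquiv_inl (k1 k2 : ℕ) (i : Fin 3) :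
    (doubleCometThreeEquiv k1 k2 (.inl i) : ℕ) = i := by
  simp [doubleCometThreeEquiv]

@[simp]
theorem doubleCometThreeEquiv_inr_inl (k1 k2 : ℕ) (j : Fin k1) :
    (doubleCometThreeEquiv k1 k2 (.inr (.inl j)) : ℕ) = 3 + j := by
  simp [doubleCometThreeEquiv, add_comm]

@[simp]
theorem doubleCometThreeEquiv_inr_inr (k1 k2 : ℕ) (j : Fin k2) :
    (doubleCometThreeEquiv k1 k2 (.inr (.inr j)) : ℕ) = 3 + k1 + j := by
  simp only [doubleCometThreeEquiv, Equiv.trans_apply, Equiv.sumCongr_apply, Equiv.coe_refl,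
    Sum.map_inr, finSumFinEquiv_apply_right, finCongr_apply, Fin.cast_natAdd, Fin.val_addNat,
    Fin.val_natAdd]
  omega

theorem adjMat_doubleComet_three (k1 k2 : ℕ) :
    adjMat (doubleComet k1 k2 3) = reindex (doubleCometThreeEquiv k1 k2)
      (doubleCometThreeEquiv k1 k2)
      (fromBlocks (pathAdj 3) (pendantIncidence k1 k2) (pendantIncidence k1 k2)ᵀ 0) := by
  ext i j
  obtain ⟨a, rfl⟩ := (doubleCometThreeEquiv k1 k2).surjective i
  obtain ⟨b, rfl⟩ := (doubleCometThreeEquiv k1 k2).surjective j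
  rcases a with a | a | a <;> rcases b with b | b | b <;>
    simp only [adjMat, doubleComet, SimpleGraph.fromRel_adj, ne_eq, Fin.ext_iff, reindex_apply,
      submatrix_apply, Equiv.symm_apply_apply, fromBlocks_apply₁₁, fromBlocks_apply₁₂,
      fromBlocks_apply₂₁, fromBlocks_apply₂₂, transpose_apply, Matrix.zero_apply, pathAdj,
      pendantIncidence, of_apply, Sum.elim_inl, Sum.elim_inr, doubleCometThreeEquiv_inl,
      doubleCometThreeEquiv_inr_inl, doubleCometThreeEquiv_inr_inr] <;>
    split_ifs <;> first | rfl | (exfalso; omega)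

theorem charpoly_adjMat_doubleComet_three {k1 k2 : ℕ} (hk : 1 ≤ k1 + k2) :
    (adjMat (doubleComet k1 k2 3)).charpoly =
      X ^ (k1 + k2 - 1) *
        (X ^ 4 - C ((k1 : ℝ) + k2 + 2) * X ^ 2 + C ((k1 : ℝ) * k2 + k1 + k2)) := by
  have h := X_pow_card_mul_charpoly_fromBlocks_zero₂₂ (pathAdj 3) (pendantIncidence k1 k2)
    (pendantIncidence k1 k2)ᵀ
  rw [pendantIncidence_mul_transpose, det_X_smul_charmatrix_pathAdj_three_sub_diagonal,
    Fintype.card_fin, Fintype.card_sum, Fintype.card_fin, Fintype.card_fin] at h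
  rw [adjMat_doubleComet_three, charpoly_reindex]
  obtain ⟨m, hm⟩ : ∃ m, k1 + k2 = m + 1 := ⟨k1 + k2 - 1, by omega⟩
  refine mul_left_cancel₀ (pow_ne_zero 3 X_ne_zero) ?_
  rw [h, hm, Nat.add_sub_cancel]
  ring

/-- The two largest adjacency eigenvalues of the double comet `DC(k1, k2, 3)`. -/
theorem lam_doubleComet_three (k1 k2 : ℕ) (hk : 1 ≤ k1 + k2) :
    lam 1 (doubleComet k1 k2 3) =
      Real.sqrt ((((k1 + k2 + 3 : ℕ) : ℝ) - 1 +
        Real.sqrt (((k1 : ℝ) - (k2 : ℝ)) ^ 2 + 4)) / 2) ∧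
    lam 2 (doubleComet k1 k2 3) =
      Real.sqrt ((((k1 + k2 + 3 : ℕ) : ℝ) - 1 -
        Real.sqrt (((k1 : ℝ) - (k2 : ℝ)) ^ 2 + 4)) / 2) := by
  have hn : (((k1 + k2 + 3 : ℕ) : ℝ)) - 1 = k1 + k2 + 2 := by push_cast; ring
  rw [hn]
  set d := √(((k1 : ℝ) - k2) ^ 2 + 4)
  have hd : d ^ 2 = ((k1 : ℝ) - k2) ^ 2 + 4 := Real.sq_sqrt (by positivity)
  have hd_nonneg : 0 ≤ d := Real.sqrt_nonneg _
  set μ := ((k1 : ℝ) + k2 + 2 + d) / 2 with hμ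
  set ν := ((k1 : ℝ) + k2 + 2 - d) / 2 with hν
  have hν_nonneg : 0 ≤ ν := by
    have : d ≤ k1 + k2 + 2 := Real.sqrt_le_iff.2 ⟨by positivity, by nlinarith⟩
    linarith
  have hνμ : ν ≤ μ := by linarith
  have hsum : μ + ν = k1 + k2 + 2 := by linarith
  have hprod : μ * ν = k1 * k2 + k1 + k2 := by rw [hμ, hν]; linear_combination -hd / 4
  have hroots : (adjMat (doubleComet k1 k2 3)).charpoly.roots =
      ((k1 + k2 - 1) • {0} + {-√μ, -√ν}) + {√ν, √μ} := by
    rw [charpoly_adjMat_doubleComet_three hk, ← hsum, ← hprod, X_pow_four_sub_C_mul_X_sq_add_C,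
      roots_X_pow_mul_X_sq_sub_C_mul_X_sq_sub_C _ hν_nonneg hνμ]
  refine lam_one_lam_two_of_roots _ ?_ hroots ?_ (Real.sqrt_le_sqrt hνμ)
  · simp only [Multiset.card_add, Multiset.card_nsmul, Multiset.card_singleton,
      Multiset.insert_eq_cons, Multiset.card_cons]
    omega
  · intro x hx
    simp only [Multiset.mem_add, Multiset.mem_nsmul, Multiset.mem_singleton,
      Multiset.insert_eq_cons, Multiset.mem_cons] at hx
    rcases hx with ⟨-, rfl⟩ | rfl | rfl <;> linarith [Real.sqrt_nonneg μ, Real.sqrt_nonneg ν]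
end

section
/- Let n ≥ 6 be an even integer and let T = DC((n-4)/2, (n-2)/2, 3). Then the multiset of eigenvalues of the adjacency matrix of T is {√((n-1+√5)/2), -√((n-1+√5)/2), √((n-1-√5)/2), -√((n-1-√5)/2)} together with the eigenvalue 0 with multiplicity n - 4. -/
open scoped Classical

/-!
Order the vertices of `DC(a, b, 3)` as the path `0, 1, 2`, then the `a` leaves at `0`, then the
`b` leaves at `2`. In `x • 1 - A` the leaf block is `x • 1`, so for `x ≠ 0` the Schur complement
gives `det (x • 1 - A) = x ^ (a + b) * det (x • 1 - P₃ - x⁻¹ • diag(a, 0, b))`, i.e.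
`x * χ(x) = x ^ (a + b) * (x⁴ - (a + b + 2) x² + ab + a + b)`. For `a = (n - 4) / 2` and
`b = (n - 2) / 2` the quartic is `(x² - u)(x² - v)` with `u, v = (n - 1 ± √5) / 2`.
-/

open Matrix Polynomial

namespace DoubleComet

variable (a b : ℕ)

def vertexEquiv : Fin 3 ⊕ (Fin a ⊕ Fin b) ≃ Fin (a + b + 3) :=
  ((Equiv.refl (Fin 3)).sumCongr finSumFinEquiv).trans
    (finSumFinEquiv.trans (finCongr (by omega)))

@[simp] lemma val_vertexEquiv_inl (i : Fin 3) : (vertexEquiv a b (.inl i) : ℕ) = i := by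
  simp [vertexEquiv]

@[simp] lemma val_vertexEquiv_inr_inl (u : Fin a) :
    (vertexEquiv a b (.inr (.inl u)) : ℕ) = 3 + u := by
  simp [vertexEquiv]; omega

@[simp] lemma val_vertexEquiv_inr_inr (v : Fin b) :
    (vertexEquiv a b (.inr (.inr v)) : ℕ) = 3 + a + v := by
  simp [vertexEquiv]; omega

def leafAnchor : Fin a ⊕ Fin b → Fin 3 := Sum.elim (fun _ => 0) (fun _ => 2)

def leafIncidence : Matrix (Fin 3) (Fin a ⊕ Fin b) ℝ :=
  of fun i u => if leafAnchor a b u = i then 1 else 0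

lemma leafIncidence_mul_transpose :
    leafIncidence a b * (leafIncidence a b)ᵀ = diagonal ![(a : ℝ), 0, b] := by
  ext i j
  fin_cases i <;> fin_cases j <;>
    simp [leafIncidence, leafAnchor, mul_apply, Fintype.sum_sum_type]

lemma adjMat_submatrix_vertexEquiv :
    (adjMat (doubleComet a b 3)).submatrix (vertexEquiv a b) (vertexEquiv a b) =
      fromBlocks !![0, 1, 0; 1, 0, 1; 0, 1, 0] (leafIncidence a b) (leafIncidence a b)ᵀ 0 := by
  ext (i | u | v) (j | u | v) <;>
    simp only [adjMat, doubleComet, SimpleGraph.fromRel_adj, submatrix_apply, fromBlocks_apply₁₁,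
      fromBlocks_apply₁₂, fromBlocks_apply₂₁, fromBlocks_apply₂₂, transpose_apply, leafIncidence,
      leafAnchor, of_apply, Sum.elim_inl, Sum.elim_inr, Matrix.zero_apply, ne_eq, Fin.ext_iff,
      val_vertexEquiv_inl, val_vertexEquiv_inr_inl, val_vertexEquiv_inr_inr, Fin.val_zero, Fin.val_two]
  all_goals (try fin_cases i) <;> (try fin_cases j) <;> simp <;> omega

lemma scalar_sub_adjMat_submatrix_vertexEquiv (x : ℝ) :
    (scalar _ x - adjMat (doubleComet a b 3)).submatrix (vertexEquiv a b) (vertexEquiv a b) =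
      fromBlocks (scalar _ x - !![0, 1, 0; 1, 0, 1; 0, 1, 0]) (-leafIncidence a b)
        (-(leafIncidence a b)ᵀ) (scalar _ x) := by
  simp only [submatrix_sub, Pi.sub_apply]
  rw [adjMat_submatrix_vertexEquiv, scalar_apply, scalar_apply, scalar_apply,
    submatrix_diagonal_equiv]
  ext (i | i) (j | j) <;> simp [diagonal_apply]

lemma det_scalar_sub_adjMat_mul_self (x : ℝ) (hx : x ≠ 0) :
    (scalar _ x - adjMat (doubleComet a b 3)).det * x =
      x ^ (a + b) * (x ^ 4 - (a + b + 2) * x ^ 2 + (a * b + a + b)) := by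
  have hinv : scalar (Fin a ⊕ Fin b) x * scalar _ x⁻¹ = 1 := by
    rw [← map_mul, mul_inv_cancel₀ hx, map_one]
  let := invertibleOfRightInverse _ _ hinv
  rw [← det_submatrix_equiv_self (vertexEquiv a b), scalar_sub_adjMat_submatrix_vertexEquiv,
    det_fromBlocks₂₂, invOf_eq_right_inv hinv]
  simp only [Matrix.neg_mul, Matrix.mul_neg, neg_neg]
  rw [scalar_apply x⁻¹, ← smul_eq_mul_diagonal, smul_mul, leafIncidence_mul_transpose]
  have hschur : scalar _ x - !![0, 1, 0; 1, 0, 1; 0, 1, 0] - x⁻¹ • diagonal ![(a : ℝ), 0, b] =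
      !![x - x⁻¹ * a, -1, 0; -1, x, -1; 0, -1, x - x⁻¹ * b] := by
    ext i j
    fin_cases i <;> fin_cases j <;> simp
  rw [hschur, det_fin_three, scalar_apply, det_diagonal, Finset.prod_const, Finset.card_univ,
    Fintype.card_sum, Fintype.card_fin, Fintype.card_fin]
  simp only [of_apply, cons_val', cons_val_zero, cons_val_one, cons_val, cons_val_fin_one]
  field_simp
  ring

theorem charpoly_adjMat_mul_X :
    (adjMat (doubleComet a b 3)).charpoly * X =
      X ^ (a + b) * (X ^ 4 - C ((a : ℝ) + b + 2) * X ^ 2 + C ((a : ℝ) * b + a + b)) := by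
  refine eq_of_infinite_eval_eq _ _ ((Set.finite_singleton 0).infinite_compl.mono fun x hx => ?_)
  simp only [Set.mem_ofPred_eq, eval_mul, eval_X, eval_pow, eval_sub, eval_add, eval_C,
    eval_charpoly]
  exact det_scalar_sub_adjMat_mul_self a b x hx

theorem roots_charpoly_adjMat {u v : ℝ} (hsum : u + v = a + b + 2) (hprod : u * v = a * b + a + b)
    (hab : 1 ≤ a + b) :
    (adjMat (doubleComet a b 3)).charpoly.roots =
      {√u, -√u, √v, -√v} + Multiset.replicate (a + b - 1) 0 := by
  have hab₀ : (0 : ℝ) ≤ a * b := by positivity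
  have hu : 0 ≤ u := by nlinarith
  have hv : 0 ≤ v := by nlinarith
  obtain ⟨k, hk⟩ : ∃ k, a + b = k + 1 := ⟨a + b - 1, by omega⟩
  suffices h : (adjMat (doubleComet a b 3)).charpoly =
      (({√u, -√u, √v, -√v} + Multiset.replicate (a + b - 1) 0 : Multiset ℝ).map (X - C ·)).prod by
    rw [h, roots_multiset_prod_X_sub_C]
  refine mul_right_cancel₀ X_ne_zero ((charpoly_adjMat_mul_X a b).trans ?_)
  obtain ⟨s, hs, rfl⟩ : ∃ s, 0 ≤ s ∧ s ^ 2 = u := ⟨√u, Real.sqrt_nonneg u, Real.sq_sqrt hu⟩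
  obtain ⟨t, ht, rfl⟩ : ∃ t, 0 ≤ t ∧ t ^ 2 = v := ⟨√v, Real.sqrt_nonneg v, Real.sq_sqrt hv⟩
  rw [← hsum, ← hprod, Real.sqrt_sq hs, Real.sqrt_sq ht, hk, Nat.add_sub_cancel]
  simp only [Multiset.map_add, Multiset.prod_add, Multiset.map_replicate, Multiset.prod_replicate,
    Multiset.insert_eq_cons, Multiset.map_cons, Multiset.prod_cons, Multiset.map_singleton,
    Multiset.prod_singleton, map_zero, sub_zero, map_add, map_mul, map_pow, map_neg]
  ring

end DoubleComet

/-- The spectrum (multiset of adjacency eigenvalues) of `DC((n-4)/2, (n-2)/2, 3)` for even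
`n ≥ 6` is `{±√((n-1+√5)/2), ±√((n-1-√5)/2)}` together with `0` of multiplicity `n - 4`. -/
theorem spectrum_balanced_DC_even (n : ℕ) (hn : 6 ≤ n) (heven : Even n) :
    (Matrix.charpoly (adjMat (doubleComet ((n - 4) / 2) ((n - 2) / 2) 3))).roots =
      {Real.sqrt (((n : ℝ) - 1 + Real.sqrt 5) / 2),
       -Real.sqrt (((n : ℝ) - 1 + Real.sqrt 5) / 2),
       Real.sqrt (((n : ℝ) - 1 - Real.sqrt 5) / 2),
       -Real.sqrt (((n : ℝ) - 1 - Real.sqrt 5) / 2)} +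
      Multiset.replicate (n - 4) (0 : ℝ) := by
  obtain ⟨k, rfl⟩ := heven
  have ha : (k + k - 4) / 2 = k - 2 := by omega
  have hb : (k + k - 2) / 2 = k - 1 := by omega
  have hmult : k + k - 4 = k - 2 + (k - 1) - 1 := by omega
  have hcast₂ : ((k - 2 : ℕ) : ℝ) = k - 2 := by rw [Nat.cast_sub (by omega)]; norm_num
  have hcast₁ : ((k - 1 : ℕ) : ℝ) = k - 1 := by rw [Nat.cast_sub (by omega)]; norm_num
  rw [ha, hb, hmult]
  apply DoubleComet.roots_charpoly_adjMat
  · rw [hcast₂, hcast₁]; push_cast; ring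
  · rw [hcast₂, hcast₁]; push_cast
    linear_combination (-1 / 4 : ℝ) * Real.sq_sqrt (show (0 : ℝ) ≤ 5 by norm_num)
  · omega
end

section
/- Let k1, k2 ≥ 0 be integers with k1 + k2 ≥ 1 and let n = k1 + k2 + 3. Then the characteristic polynomial of the adjacency matrix of the double comet DC(k1, k2, 3) equals x^(n-4)·(x⁴ - (n-1)x² + k1·k2 + k1 + k2). -/
open scoped Classical

/-!
Order the vertices of `DC(k1, k2, l)` path first, leaves last. The adjacency matrix becomes
`[[P, B], [Bᵀ, 0]]` with `P` the adjacency matrix of the path and `B` recording where each leaf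
hangs, so a Schur complement along the leaf block gives, for `x ≠ 0`,
`Φ(x) = x^(k1+k2) · det(x I - P - x⁻¹ B Bᵀ)`. For `l = 3`, `B Bᵀ = diag(k1, 0, k2)` and this is
an explicit `3 × 3` determinant; two polynomials agreeing on all `x ≠ 0` are equal.
-/

open Matrix Polynomial

namespace Matrix

/-- The vertex–leaf block of the adjacency matrix when each leaf `j` hangs at the vertex `f j`. -/
def leafIncidence {m n : Type*} (R : Type*) [DecidableEq m] [Zero R] [One R] (f : n → m) :
    Matrix m n R :=
  of fun i j => if f j = i then 1 else 0

theorem leafIncidence_mul_transpose {m n R : Type*} [Fintype n] [DecidableEq m]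
    [NonAssocSemiring R] (f : n → m) :
    leafIncidence R f * (leafIncidence R f)ᵀ =
      diagonal fun i => ((Finset.univ.filter fun j => f j = i).card : R) := by
  ext i i'
  rw [Matrix.mul_apply, diagonal_apply]
  simp only [transpose_apply, leafIncidence, of_apply, ite_mul, one_mul, zero_mul, ← ite_and,
    Finset.sum_boole]
  split_ifs with h
  · subst h
    congr 2
    ext j
    simp
  · rw [Finset.filter_false_of_mem fun j _ hj => h (hj.1.symm.trans hj.2), Finset.card_empty,
      Nat.cast_zero]

theorem scalar_sub_fromBlocks {m n R : Type*} [Fintype m] [Fintype n] [DecidableEq m]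
    [DecidableEq n] [Ring R] (x : R) (A : Matrix m m R) (B : Matrix m n R) (C : Matrix n m R)
    (D : Matrix n n R) :
    scalar (m ⊕ n) x - fromBlocks A B C D =
      fromBlocks (scalar m x - A) (-B) (-C) (scalar n x - D) := by
  ext (i | i) (j | j) <;> simp [scalar_apply, diagonal_apply, sub_eq_add_neg]

theorem det_scalar_sub_fromBlocks_zero₂₂ {m n K : Type*} [Fintype m] [Fintype n]
    [DecidableEq m] [DecidableEq n] [Field K] (A : Matrix m m K) (B : Matrix m n K)
    (C : Matrix n m K) {x : K} (hx : x ≠ 0) :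
    (scalar (m ⊕ n) x - fromBlocks A B C 0).det =
      x ^ Fintype.card n * (scalar m x - A - x⁻¹ • (B * C)).det := by
  let : Invertible (scalar n x) :=
    ⟨scalar n x⁻¹, by rw [← map_mul, inv_mul_cancel₀ hx, map_one],
      by rw [← map_mul, mul_inv_cancel₀ hx, map_one]⟩
  have hinv : ⅟(scalar n x) = x⁻¹ • 1 := (smul_one_eq_diagonal x⁻¹).symm
  rw [scalar_sub_fromBlocks, sub_zero, det_fromBlocks₂₂, hinv, Matrix.mul_smul, Matrix.mul_one,
    Matrix.smul_mul, Matrix.neg_mul, Matrix.mul_neg, neg_neg, scalar_apply, det_diagonal,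
    Finset.prod_const, Finset.card_univ]

end Matrix

def doubleCometEquiv (k1 k2 l : ℕ) : Fin l ⊕ (Fin k1 ⊕ Fin k2) ≃ Fin (k1 + k2 + l) :=
  (Equiv.sumCongr (Equiv.refl _) finSumFinEquiv).trans
    (finSumFinEquiv.trans (finCongr (Nat.add_comm l _)))

def doubleCometParent (k1 k2 l : ℕ) (hl : 0 < l) : Fin k1 ⊕ Fin k2 → Fin l :=
  Sum.elim (fun _ => ⟨0, hl⟩) (fun _ => ⟨l - 1, Nat.sub_lt hl one_pos⟩)

section doubleComet

variable {k1 k2 l : ℕ}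

theorem val_doubleCometEquiv_inl (i : Fin l) :
    (doubleCometEquiv k1 k2 l (.inl i) : ℕ) = i := rfl

theorem val_doubleCometEquiv_inr_inl (a : Fin k1) :
    (doubleCometEquiv k1 k2 l (.inr (.inl a)) : ℕ) = l + a := rfl

theorem val_doubleCometEquiv_inr_inr (b : Fin k2) :
    (doubleCometEquiv k1 k2 l (.inr (.inr b)) : ℕ) = l + (k1 + b) := rfl

theorem doubleComet_adj_inl_inl (i j : Fin l) :
    (doubleComet k1 k2 l).Adj (doubleCometEquiv k1 k2 l (.inl i))
        (doubleCometEquiv k1 k2 l (.inl j)) ↔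
      (SimpleGraph.pathGraph l).Adj i j := by
  simp only [doubleComet, SimpleGraph.fromRel_adj, SimpleGraph.pathGraph_adj, ne_eq, Fin.ext_iff,
    val_doubleCometEquiv_inl]
  omega

theorem doubleComet_adj_inl_inr (hl : 0 < l) (i : Fin l) (a : Fin k1 ⊕ Fin k2) :
    (doubleComet k1 k2 l).Adj (doubleCometEquiv k1 k2 l (.inl i))
        (doubleCometEquiv k1 k2 l (.inr a)) ↔
      doubleCometParent k1 k2 l hl a = i := by
  rcases a with a | b <;>
    simp only [doubleComet, SimpleGraph.fromRel_adj, doubleCometParent, ne_eq, Fin.ext_iff,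
      Sum.elim_inl, Sum.elim_inr, val_doubleCometEquiv_inl, val_doubleCometEquiv_inr_inl,
      val_doubleCometEquiv_inr_inr] <;>
    omega

theorem doubleComet_not_adj_inr_inr (hl : 0 < l) (a b : Fin k1 ⊕ Fin k2) :
    ¬(doubleComet k1 k2 l).Adj (doubleCometEquiv k1 k2 l (.inr a))
        (doubleCometEquiv k1 k2 l (.inr b)) := by
  rcases a with a | a <;> rcases b with b | b <;>
    simp only [doubleComet, SimpleGraph.fromRel_adj, ne_eq, Fin.ext_iff,
      val_doubleCometEquiv_inr_inl, val_doubleCometEquiv_inr_inr] <;>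
    omega

theorem adjMat_doubleComet_submatrix (hl : 0 < l) :
    (adjMat (doubleComet k1 k2 l)).submatrix (doubleCometEquiv k1 k2 l)
        (doubleCometEquiv k1 k2 l) =
      fromBlocks ((SimpleGraph.pathGraph l).adjMatrix ℝ)
        (leafIncidence ℝ (doubleCometParent k1 k2 l hl))
        (leafIncidence ℝ (doubleCometParent k1 k2 l hl))ᵀ 0 := by
  ext (i | a) (j | b)
  · simp only [submatrix_apply, adjMat, fromBlocks_apply₁₁, SimpleGraph.adjMatrix_apply,
      doubleComet_adj_inl_inl]
  · simp only [submatrix_apply, adjMat, fromBlocks_apply₁₂, leafIncidence, of_apply,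
      doubleComet_adj_inl_inr hl]
  · simp only [submatrix_apply, adjMat, fromBlocks_apply₂₁, leafIncidence, of_apply,
      transpose_apply, SimpleGraph.adj_comm _ _ (doubleCometEquiv k1 k2 l (.inl j)),
      doubleComet_adj_inl_inr hl]
  · simp only [submatrix_apply, adjMat, fromBlocks_apply₂₂, Matrix.zero_apply,
      doubleComet_not_adj_inr_inr hl, if_false]

theorem eval_charpoly_adjMat_doubleComet (hl : 0 < l) {x : ℝ} (hx : x ≠ 0) :
    (adjMat (doubleComet k1 k2 l)).charpoly.eval x =
      x ^ (k1 + k2) * (scalar (Fin l) x - (SimpleGraph.pathGraph l).adjMatrix ℝ -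
        x⁻¹ • diagonal fun i =>
          ((Finset.univ.filter fun j => doubleCometParent k1 k2 l hl j = i).card : ℝ)).det := by
  rw [← charpoly_reindex (doubleCometEquiv k1 k2 l).symm, reindex_apply, Equiv.symm_symm,
    adjMat_doubleComet_submatrix hl, eval_charpoly, det_scalar_sub_fromBlocks_zero₂₂ _ _ _ hx,
    leafIncidence_mul_transpose, Fintype.card_sum, Fintype.card_fin, Fintype.card_fin]

end doubleComet

theorem card_filter_doubleCometParent_three (k1 k2 : ℕ) (i : Fin 3) :
    ((Finset.univ.filter fun j => doubleCometParent k1 k2 3 three_pos j = i).card : ℝ) =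
      ![(k1 : ℝ), 0, k2] i := by
  rw [Finset.card_filter, Fintype.sum_sum_type]
  fin_cases i <;> simp [doubleCometParent]

/-- The characteristic polynomial of `DC(k1, k2, 3)` is
`x^(n-4) (x⁴ - (n-1) x² + k1 k2 + k1 + k2)` where `n = k1 + k2 + 3`. -/
theorem charpoly_doubleComet_three (k1 k2 : ℕ) (hk : 1 ≤ k1 + k2) :
    Matrix.charpoly (adjMat (doubleComet k1 k2 3)) =
      Polynomial.X ^ (k1 + k2 + 3 - 4) *
        (Polynomial.X ^ 4 -
          Polynomial.C (((k1 + k2 + 3 : ℕ) : ℝ) - 1) * Polynomial.X ^ 2 +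
          Polynomial.C ((k1 : ℝ) * k2 + k1 + k2)) := by
  refine eq_of_infinite_eval_eq _ _ ((Set.finite_singleton 0).infinite_compl.mono fun x hx => ?_)
  have hx : x ≠ 0 := hx
  obtain ⟨n, hn⟩ : ∃ n, k1 + k2 = n + 1 := ⟨k1 + k2 - 1, by omega⟩
  have hn' : (k1 : ℝ) + k2 = n + 1 := by exact_mod_cast hn
  rw [Set.mem_ofPred_eq, eval_charpoly_adjMat_doubleComet three_pos hx, det_fin_three,
    show k1 + k2 + 3 - 4 = n by omega, hn]
  simp [card_filter_doubleCometParent_three, SimpleGraph.pathGraph_adj]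
  field_simp
  linear_combination (-x ^ 3 * x ^ n) * hn'
end

section
/- Let k1, k2 ≥ 0 be integers with k1 + k2 ≥ 2 and let n = k1 + k2 + 2. Then the characteristic polynomial of the adjacency matrix of the double comet DC(k1, k2, 2) equals x^(n-4)·(x⁴ - (n-1)x² + k1·k2). -/
open scoped Classical

/-!
Put the two hubs of `DC(k1, k2, 2)` first and the leaves after them. The adjacency matrix becomes
`[[P, B], [Bᵀ, 0]]`, where `P` is the adjacency matrix of an edge and `B Bᵀ = diag(k1, k2)` because
the hubs have disjoint sets of leaves. For `x ≠ 0` the block `x I` facing the leaves is invertible,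
and its Schur complement gives `φ(x) = x^(n-2) ((x - k1/x) (x - k2/x) - 1)`; the two sides of the
identity are polynomials that agree at every nonzero real, hence are equal.
-/

open Matrix Polynomial

theorem Matrix.eval_charpoly_fromBlocks_zero₂₂ {m n K : Type*} [Fintype m] [DecidableEq m]
    [Fintype n] [DecidableEq n] [Field K] (A : Matrix m m K) (B : Matrix m n K)
    (C : Matrix n m K) {x : K} (hx : x ≠ 0) :
    (fromBlocks A B C 0).charpoly.eval x =
      x ^ Fintype.card n * det (scalar m x - A - x⁻¹ • (B * C)) := by
  have : Invertible x := invertibleOfNonzero hx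
  have : Invertible (scalar n x) := Invertible.map (scalar n) x
  have hblocks : scalar (m ⊕ n) x - fromBlocks A B C 0 =
      fromBlocks (scalar m x - A) (-B) (-C) (scalar n x) := by
    ext (i | i) (j | j) <;> simp [fromBlocks, diagonal_apply]
  rw [eval_charpoly, hblocks, det_fromBlocks₂₂, ← map_invOf, invOf_eq_inv]
  simp [scalar_apply, ← smul_one_eq_diagonal, Matrix.mul_smul, Matrix.smul_mul]

/-- Row `i` marks the leaves hanging from hub `i`: the `k1` leaves of `Fin k1` from hub `0`, the
`k2` leaves of `Fin k2` from hub `1`. -/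
def hubLeafIncidence (k1 k2 : ℕ) : Matrix (Fin 2) (Fin k1 ⊕ Fin k2) ℝ :=
  of fun i j => if Sum.elim (fun _ => 0) (fun _ => 1) j = i then 1 else 0

theorem hubLeafIncidence_mul_transpose (k1 k2 : ℕ) :
    hubLeafIncidence k1 k2 * (hubLeafIncidence k1 k2)ᵀ = diagonal ![(k1 : ℝ), k2] := by
  ext i j
  fin_cases i <;> fin_cases j <;> simp [hubLeafIncidence, mul_apply, Fintype.sum_sum_type]

def doubleCometTwoEquiv (k1 k2 : ℕ) : Fin 2 ⊕ (Fin k1 ⊕ Fin k2) ≃ Fin (k1 + k2 + 2) :=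
  (Equiv.sumCongr (Equiv.refl _) finSumFinEquiv).trans
    (finSumFinEquiv.trans (finCongr (by omega)))

section

variable (k1 k2 : ℕ)

@[simp]
theorem doubleCometTwoEquiv_inl_val (i : Fin 2) :
    (doubleCometTwoEquiv k1 k2 (.inl i) : ℕ) = i := by
  simp [doubleCometTwoEquiv]

@[simp]
theorem doubleCometTwoEquiv_inr_inl_val (a : Fin k1) :
    (doubleCometTwoEquiv k1 k2 (.inr (.inl a)) : ℕ) = a + 2 := by
  simp [doubleCometTwoEquiv]

@[simp]
theorem doubleCometTwoEquiv_inr_inr_val (b : Fin k2) :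
    (doubleCometTwoEquiv k1 k2 (.inr (.inr b)) : ℕ) = k1 + b + 2 := by
  simp [doubleCometTwoEquiv]

theorem reindex_adjMat_doubleComet_two :
    reindex (doubleCometTwoEquiv k1 k2).symm (doubleCometTwoEquiv k1 k2).symm
        (adjMat (doubleComet k1 k2 2)) =
      fromBlocks !![0, 1; 1, 0] (hubLeafIncidence k1 k2) (hubLeafIncidence k1 k2)ᵀ 0 := by
  ext (i | a | b) (j | a' | b') <;>
    simp only [reindex_apply, Equiv.symm_symm, submatrix_apply, adjMat, doubleComet,
      SimpleGraph.fromRel_adj, ne_eq, Fin.ext_iff, doubleCometTwoEquiv_inl_val,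
      doubleCometTwoEquiv_inr_inl_val, doubleCometTwoEquiv_inr_inr_val, fromBlocks_apply₁₁,
      fromBlocks_apply₁₂, fromBlocks_apply₂₁, fromBlocks_apply₂₂, hubLeafIncidence, of_apply,
      transpose_apply, Matrix.zero_apply, Sum.elim_inl, Sum.elim_inr, Fin.val_zero, Fin.val_one]
  case inl.inl => fin_cases i <;> fin_cases j <;> simp
  all_goals grind

theorem eval_charpoly_adjMat_doubleComet_two {x : ℝ} (hx : x ≠ 0) :
    (adjMat (doubleComet k1 k2 2)).charpoly.eval x =
      x ^ (k1 + k2) * ((x - x⁻¹ * k1) * (x - x⁻¹ * k2) - 1) := by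
  rw [← charpoly_reindex (doubleCometTwoEquiv k1 k2).symm, reindex_adjMat_doubleComet_two,
    eval_charpoly_fromBlocks_zero₂₂ _ _ _ hx, hubLeafIncidence_mul_transpose, det_fin_two]
  simp

end

/-- The characteristic polynomial of `DC(k1, k2, 2)` is
`x^(n-4) (x⁴ - (n-1) x² + k1 k2)` where `n = k1 + k2 + 2`. -/
theorem charpoly_doubleComet_two (k1 k2 : ℕ) (hk : 2 ≤ k1 + k2) :
    Matrix.charpoly (adjMat (doubleComet k1 k2 2)) =
      Polynomial.X ^ (k1 + k2 + 2 - 4) *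
        (Polynomial.X ^ 4 -
          Polynomial.C (((k1 + k2 + 2 : ℕ) : ℝ) - 1) * Polynomial.X ^ 2 +
          Polynomial.C ((k1 : ℝ) * k2)) := by
  refine eq_of_infinite_eval_eq _ _
    ((Set.finite_singleton 0).infinite_compl.mono fun x (hx : x ≠ 0) => ?_)
  have hpow : x ^ (k1 + k2) = x ^ (k1 + k2 + 2 - 4) * x ^ 2 := by
    rw [← pow_add]
    congr 1
    omega
  rw [Set.mem_ofPred_eq, eval_charpoly_adjMat_doubleComet_two k1 k2 hx]
  simp only [eval_mul, eval_pow, eval_X, eval_add, eval_sub, eval_C, hpow]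
  push_cast
  field_simp
  ring
end

section
/- Let T be a tree, let x be the unit eigenvector with positive entries of the adjacency matrix of T for the eigenvalue λ₁(T), and let y be any unit eigenvector for the eigenvalue λ₂(T). Suppose u, v, w are vertices of T with u adjacent to v, v adjacent to w, and u ≠ w, and let T' be the graph obtained from T by deleting the edge vw and adding the edge uw. Fix α ≥ 1/2. If α·x_w·(x_u - x_v) + (1-α)·y_w·(y_u - y_v) > 0, then αλ₁(T') + (1-α)λ₂(T') > αλ₁(T) + (1-α)λ₂(T). -/
/-!
Both eigenvectors of `T` are tested against `T'`. Since `T` has no triangle, `uw` is not an edge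
of `T`, so `A(T') = A(T) - A(vw) + A(uw)` and `z ⬝ A(T') z = z ⬝ A(T) z + 2 z_w (z_u - z_v)`.
Because `T` is connected and `x > 0`, Perron–Frobenius gives `λ₂(T) < λ₁(T)`, so `x ⊥ y`. For
orthonormal `z₁, z₂` and `α ≥ 1/2`, a weighted Ky Fan inequality bounds
`α z₁ ⬝ A z₁ + (1 - α) z₂ ⬝ A z₂` by `α λ₁ + (1 - α) λ₂`; applied to `A(T')` with `z₁ = x`,
`z₂ = y` it gives the claim.
-/

open scoped Classical

open Matrix

section RealVectors

variable {ι : Type*} [Fintype ι]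

lemma sq_dotProduct_add_sq_dotProduct_le {a b : ι → ℝ} (ha : a ⬝ᵥ a = 1) (hb : b ⬝ᵥ b = 1)
    (hab : a ⬝ᵥ b = 0) (v : ι → ℝ) : (a ⬝ᵥ v) ^ 2 + (b ⬝ᵥ v) ^ 2 ≤ v ⬝ᵥ v := by
  have h := dotProduct_star_self_nonneg (v - (a ⬝ᵥ v) • a - (b ⬝ᵥ v) • b)
  simp only [star_trivial, sub_dotProduct, dotProduct_sub, smul_dotProduct, dotProduct_smul,
    smul_eq_mul, ha, hb, hab, dotProduct_comm b a, dotProduct_comm v a, dotProduct_comm v b] at h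
  nlinarith

lemma sum_mul_le_mul_add_one_sub_mul {w e : ι → ℝ} {i₀ : ι} {α μ : ℝ} (hw : ∀ i, 0 ≤ w i)
    (hw₁ : ∑ i, w i = 1) (hwi₀ : w i₀ ≤ α) (he : ∀ i ≠ i₀, e i ≤ μ) (hμ : μ ≤ e i₀) :
    ∑ i, w i * e i ≤ α * e i₀ + (1 - α) * μ := by
  have hrest : ∑ i ∈ Finset.univ.erase i₀, w i * (e i - μ) ≤ 0 :=
    Finset.sum_nonpos fun i hi =>
      mul_nonpos_of_nonneg_of_nonpos (hw i) (sub_nonpos.mpr (he i (Finset.ne_of_mem_erase hi)))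
  have hsplit := Finset.add_sum_erase Finset.univ (fun i => w i * (e i - μ)) (Finset.mem_univ i₀)
  calc ∑ i, w i * e i = ∑ i, w i * (e i - μ) + μ * ∑ i, w i := by
        rw [Finset.mul_sum, ← Finset.sum_add_distrib]
        exact Finset.sum_congr rfl fun i _ => by ring
    _ ≤ w i₀ * (e i₀ - μ) + μ := by rw [← hsplit, hw₁]; linarith
    _ ≤ α * e i₀ + (1 - α) * μ := by nlinarith

lemma exists_neg_of_dotProduct_eq_zero {x z : ι → ℝ} (hx : ∀ i, 0 < x i) (hz : z ≠ 0)
    (hxz : x ⬝ᵥ z = 0) : ∃ k, z k < 0 := by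
  by_contra! h
  obtain ⟨k, hk⟩ := Function.ne_iff.mp hz
  have : 0 < x ⬝ᵥ z :=
    Finset.sum_pos' (fun i _ => mul_nonneg (hx i).le (h i))
      ⟨k, Finset.mem_univ k, mul_pos (hx k) ((h k).lt_of_ne' hk)⟩
  exact this.ne' hxz

lemma exists_add_mul_nonneg_and_eq_zero {x z : ι → ℝ} (hx : ∀ i, 0 < x i)
    (hz : ∃ k, z k < 0) : ∃ t : ℝ, (∀ i, 0 ≤ x i + t * z i) ∧ ∃ k, x k + t * z k = 0 := by
  obtain ⟨k₀, hk₀⟩ := hz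
  obtain ⟨k, hk, hmin⟩ := Finset.exists_min_image (Finset.univ.filter (z · < 0))
    (fun i => x i / -z i) ⟨k₀, by simpa using hk₀⟩
  simp only [Finset.mem_filter, Finset.mem_univ, true_and] at hk hmin
  have ht : 0 ≤ x k / -z k := div_nonneg (hx k).le (by linarith)
  refine ⟨x k / -z k, fun i => ?_, k, by rw [div_neg, neg_mul, div_mul_cancel₀ _ hk.ne,
    add_neg_cancel]⟩
  by_cases hi : z i < 0
  · have := (le_div_iff₀ (by linarith)).mp (hmin i hi)
    nlinarith
  · nlinarith [hx i]

lemma Matrix.exists_mulVec_eq_smul_dotProduct_eq_zero {A : Matrix ι ι ℝ} {μ : ℝ} {b c : ι → ℝ}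
    (hb : A *ᵥ b = μ • b) (hc : A *ᵥ c = μ • c) (hbb : b ⬝ᵥ b = 1) (hcc : c ⬝ᵥ c = 1)
    (hbc : b ⬝ᵥ c = 0) (x : ι → ℝ) : ∃ z, z ≠ 0 ∧ A *ᵥ z = μ • z ∧ x ⬝ᵥ z = 0 := by
  by_cases hxb : x ⬝ᵥ b = 0
  · exact ⟨b, fun h => by simp [h] at hbb, hb, hxb⟩
  refine ⟨(x ⬝ᵥ c) • b - (x ⬝ᵥ b) • c, fun h => hxb ?_, ?_, ?_⟩
  · simpa [sub_dotProduct, hbc, hcc] using congrArg (· ⬝ᵥ c) h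
  · rw [mulVec_sub, mulVec_smul, mulVec_smul, hb, hc, smul_sub, smul_comm μ, smul_comm μ]
  · simp only [dotProduct_sub, dotProduct_smul, smul_eq_mul]
    ring

lemma Matrix.IsHermitian.dotProduct_eq_zero_of_mulVec_eq_smul {A : Matrix ι ι ℝ}
    (hA : A.IsHermitian) {μ ν : ℝ} {x y : ι → ℝ} (hx : A *ᵥ x = μ • x) (hy : A *ᵥ y = ν • y)
    (hμν : μ ≠ ν) : x ⬝ᵥ y = 0 := by
  have h : (A *ᵥ x) ⬝ᵥ y = x ⬝ᵥ (A *ᵥ y) := by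
    rw [dotProduct_mulVec, ← mulVec_transpose, ← conjTranspose_eq_transpose_of_trivial, hA.eq]
  rw [hx, hy, smul_dotProduct, dotProduct_smul, smul_eq_mul, smul_eq_mul] at h
  exact (mul_eq_mul_right_iff.mp h).resolve_left hμν

end RealVectors

namespace Matrix.IsHermitian

variable {ι : Type*} [Fintype ι] [DecidableEq ι] {A : Matrix ι ι ℝ} (hA : A.IsHermitian)

noncomputable def eigenCoords (z : ι → ℝ) : ι → ℝ :=
  (hA.eigenvectorUnitary : Matrix ι ι ℝ)ᵀ *ᵥ z

lemma eigenCoords_dotProduct (z z' : ι → ℝ) :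
    hA.eigenCoords z ⬝ᵥ hA.eigenCoords z' = z ⬝ᵥ z' := by
  have h := Unitary.coe_mul_star_self hA.eigenvectorUnitary
  rw [Unitary.coe_star, star_eq_conjTranspose, conjTranspose_eq_transpose_of_trivial] at h
  rw [eigenCoords, eigenCoords, mulVec_transpose, ← dotProduct_mulVec, mulVec_mulVec, h,
    one_mulVec]

lemma dotProduct_mulVec_eq_sum_eigenCoords (z : ι → ℝ) :
    z ⬝ᵥ A *ᵥ z = ∑ i, hA.eigenvalues i * hA.eigenCoords z i ^ 2 := by
  have h := hA.spectral_theorem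
  rw [Unitary.conjStarAlgAut_apply, star_eq_conjTranspose,
    conjTranspose_eq_transpose_of_trivial] at h
  conv_lhs => rw [h]
  rw [← mulVec_mulVec, ← mulVec_mulVec, dotProduct_mulVec, ← mulVec_transpose]
  simp only [eigenCoords, dotProduct, mulVec_diagonal, Function.comp_apply,
    RCLike.ofReal_real_eq_id, id]
  exact Finset.sum_congr rfl fun i _ => by ring

lemma eigenvectorBasis_dotProduct (i j : ι) :
    ⇑(hA.eigenvectorBasis i) ⬝ᵥ ⇑(hA.eigenvectorBasis j) = if i = j then 1 else 0 := by
  rw [← orthonormal_iff_ite.mp hA.eigenvectorBasis.orthonormal i j]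
  simp [PiLp.inner_apply, dotProduct, mul_comm]

theorem weighted_dotProduct_mulVec_le {α μ : ℝ} (hα : 1 / 2 ≤ α) (hα₁ : α ≤ 1) {i₀ : ι}
    (he : ∀ i ≠ i₀, hA.eigenvalues i ≤ μ) (hμ : μ ≤ hA.eigenvalues i₀) {z₁ z₂ : ι → ℝ}
    (h₁ : z₁ ⬝ᵥ z₁ = 1) (h₂ : z₂ ⬝ᵥ z₂ = 1) (h₁₂ : z₁ ⬝ᵥ z₂ = 0) :
    α * (z₁ ⬝ᵥ A *ᵥ z₁) + (1 - α) * (z₂ ⬝ᵥ A *ᵥ z₂) ≤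
      α * hA.eigenvalues i₀ + (1 - α) * μ := by
  set a := hA.eigenCoords z₁
  set b := hA.eigenCoords z₂
  have ha : a ⬝ᵥ a = 1 := by rw [hA.eigenCoords_dotProduct, h₁]
  have hb : b ⬝ᵥ b = 1 := by rw [hA.eigenCoords_dotProduct, h₂]
  have hab : a ⬝ᵥ b = 0 := by rw [hA.eigenCoords_dotProduct, h₁₂]
  set w : ι → ℝ := fun i => α * a i ^ 2 + (1 - α) * b i ^ 2
  have hw : ∀ i, 0 ≤ w i := fun i => by positivity
  have hw₁ : ∑ i, w i = 1 := by
    simp only [dotProduct] at ha hb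
    simp only [w, Finset.sum_add_distrib, ← Finset.mul_sum, sq, ha, hb]
    ring
  -- Bessel against the `i₀`-th standard basis vector; `1 - α ≤ α` turns it into `w i₀ ≤ α`.
  have hwi₀ : w i₀ ≤ α := by
    have hbessel := sq_dotProduct_add_sq_dotProduct_le ha hb hab (Pi.single i₀ 1)
    simp only [dotProduct_single_one, Pi.single_apply, ite_true] at hbessel
    simp only [w]
    nlinarith [sq_nonneg (b i₀)]
  calc α * (z₁ ⬝ᵥ A *ᵥ z₁) + (1 - α) * (z₂ ⬝ᵥ A *ᵥ z₂) = ∑ i, w i * hA.eigenvalues i := by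
        simp only [hA.dotProduct_mulVec_eq_sum_eigenCoords, Finset.mul_sum,
          ← Finset.sum_add_distrib]
        exact Finset.sum_congr rfl fun i _ => by ring
    _ ≤ α * hA.eigenvalues i₀ + (1 - α) * μ :=
        sum_mul_le_mul_add_one_sub_mul hw hw₁ hwi₀ he hμ

end Matrix.IsHermitian

lemma SimpleGraph.IsAcyclic.not_adj_of_adj_of_adj {V : Type*} {G : SimpleGraph V}
    (hG : G.IsAcyclic) {u v w : V} (huv : G.Adj u v) (hvw : G.Adj v w) : ¬ G.Adj u w := by
  intro h
  have := SimpleGraph.isBridge_iff_forall_walk_mem_edges.mp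
    (SimpleGraph.isAcyclic_iff_forall_adj_isBridge.mp hG h) (.cons huv (.cons hvw .nil))
  simp [huv.ne, hvw.ne.symm] at this

section AdjacencyMatrix

variable {n : ℕ}

lemma adjMat_eq_adjMatrix (G : SimpleGraph (Fin n)) : adjMat G = G.adjMatrix ℝ := rfl

lemma adjMat_isHermitian (G : SimpleGraph (Fin n)) : (adjMat G).IsHermitian :=
  isHermitian_iff_isSymm.mpr (G.isSymm_adjMatrix (α := ℝ))

lemma eigList_eq_reverse_ofFn (G : SimpleGraph (Fin n)) :
    eigList G = (List.ofFn (adjMat_isHermitian G).eigenvalues₀).reverse := by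
  refine List.Perm.eq_reverse_of_sortedLE_of_sortedGE ?_ (Multiset.pairwise_sort _ _).sortedLE
    (adjMat_isHermitian G).eigenvalues₀_antitone.sortedGE_ofFn
  rw [← Multiset.coe_eq_coe, eigList, Multiset.sort_eq,
    (adjMat_isHermitian G).roots_charpoly_eq_eigenvalues₀]
  simp [Fin.univ_val_map]

lemma lam_eq_eigenvalues₀ (G : SimpleGraph (Fin n)) {k : ℕ} (hk : 1 ≤ k) (hkn : k ≤ n) :
    lam k G = (adjMat_isHermitian G).eigenvalues₀ ⟨k - 1, by simp; omega⟩ := by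
  rw [lam, eigList_eq_reverse_ofFn, List.getD_eq_getElem _ _ (by simp; omega),
    List.getElem_reverse, List.getElem_ofFn]
  congr 2
  simp only [List.length_ofFn, Fintype.card_fin]
  omega

lemma lam_two_le_lam_one (G : SimpleGraph (Fin n)) (hn : 2 ≤ n) : lam 2 G ≤ lam 1 G := by
  rw [lam_eq_eigenvalues₀ G le_rfl (by omega), lam_eq_eigenvalues₀ G one_le_two hn]
  exact (adjMat_isHermitian G).eigenvalues₀_antitone (by simp [Fin.le_def])

lemma exists_eigenvalues_eq_lam (G : SimpleGraph (Fin n)) (hn : 2 ≤ n) :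
    ∃ i₀ i₁ : Fin n, i₀ ≠ i₁ ∧ (adjMat_isHermitian G).eigenvalues i₀ = lam 1 G ∧
      (adjMat_isHermitian G).eigenvalues i₁ = lam 2 G ∧
      ∀ i ≠ i₀, (adjMat_isHermitian G).eigenvalues i ≤ lam 2 G := by
  set hA := adjMat_isHermitian G
  set e : Fin (Fintype.card (Fin n)) ≃ Fin n := Fintype.equivOfCardEq (Fintype.card_fin _)
  have hcard : 1 < Fintype.card (Fin n) := by simp only [Fintype.card_fin]; omega
  have he : ∀ i, hA.eigenvalues i = hA.eigenvalues₀ (e.symm i) := fun i => rfl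
  refine ⟨e ⟨0, by omega⟩, e ⟨1, hcard⟩, by simp, ?_, ?_, fun i hi => ?_⟩
  · rw [he, lam_eq_eigenvalues₀ G le_rfl (by omega), Equiv.symm_apply_apply]
  · rw [he, lam_eq_eigenvalues₀ G one_le_two hn, Equiv.symm_apply_apply]
    rfl
  · rw [he, lam_eq_eigenvalues₀ G one_le_two hn]
    apply hA.eigenvalues₀_antitone
    have : e.symm i ≠ ⟨0, by omega⟩ := fun h => hi (by rw [← h, Equiv.apply_symm_apply])
    have := Fin.val_ne_of_ne this
    rw [Fin.le_def]
    dsimp only at this ⊢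
    omega

lemma eq_zero_of_mulVec_eq_smul_of_nonneg {G : SimpleGraph (Fin n)} (hG : G.Connected)
    {p : Fin n → ℝ} {μ : ℝ} (hp : adjMat G *ᵥ p = μ • p) (hnn : ∀ i, 0 ≤ p i) {d : Fin n}
    (hd : p d = 0) : p = 0 := by
  have hstep : ∀ a b, G.Adj a b → p a = 0 → p b = 0 := by
    intro a b hab ha
    have hsum : ∑ c ∈ G.neighborFinset a, p c = 0 := by
      rw [← SimpleGraph.adjMatrix_mulVec_apply, ← adjMat_eq_adjMatrix, hp, Pi.smul_apply, ha,
        smul_zero]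
    exact (Finset.sum_eq_zero_iff_of_nonneg fun c _ => hnn c).mp hsum b (by simpa using hab)
  funext c
  obtain ⟨W⟩ := hG.preconnected d c
  induction W with
  | nil => exact hd
  | cons hadj _ ih => exact ih (hstep _ _ hadj hd)

theorem lam_two_lt_lam_one {T : SimpleGraph (Fin n)} (hT : T.Connected) (hn : 2 ≤ n)
    {x : Fin n → ℝ} (hx : adjMat T *ᵥ x = lam 1 T • x) (hxpos : ∀ i, 0 < x i) :
    lam 2 T < lam 1 T := by
  refine (lam_two_le_lam_one T hn).lt_of_ne fun h₁₂ => ?_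
  set hA := adjMat_isHermitian T
  obtain ⟨i₀, i₁, hne, h₀, h₁, -⟩ := exists_eigenvalues_eq_lam T hn
  have hb₀ := hA.mulVec_eigenvectorBasis i₀
  have hb₁ := hA.mulVec_eigenvectorBasis i₁
  rw [h₀] at hb₀
  rw [h₁, h₁₂] at hb₁
  -- Shifting `x` along a `λ₁`-eigenvector `z ⊥ x` until an entry vanishes yields a nonnegative
  -- eigenvector with a zero entry, which connectivity forces to be `0`; but it pairs with `x`
  -- to `x ⬝ x > 0`.
  obtain ⟨z, hz, hAz, hxz⟩ := exists_mulVec_eq_smul_dotProduct_eq_zero hb₀ hb₁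
    (by simp [hA.eigenvectorBasis_dotProduct]) (by simp [hA.eigenvectorBasis_dotProduct])
    (by simp [hA.eigenvectorBasis_dotProduct, hne]) x
  obtain ⟨t, hnn, k, hk⟩ := exists_add_mul_nonneg_and_eq_zero hxpos
    (exists_neg_of_dotProduct_eq_zero hxpos hz hxz)
  have hp : adjMat T *ᵥ (x + t • z) = lam 1 T • (x + t • z) := by
    rw [mulVec_add, mulVec_smul, hx, hAz, smul_add, smul_comm]
  have hp0 := eq_zero_of_mulVec_eq_smul_of_nonneg hT hp hnn hk
  have hxx : x ⬝ᵥ x = 0 := by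
    simpa [dotProduct_add, dotProduct_smul, hxz] using congrArg (x ⬝ᵥ ·) hp0
  exact (hxpos ⟨0, by omega⟩).ne' (by simp [dotProduct_self_eq_zero.mp hxx])

lemma adjMat_edge {a b : Fin n} (hab : a ≠ b) :
    adjMat (SimpleGraph.edge a b) = single a b 1 + single b a 1 := by
  ext i j
  simp only [adjMat, SimpleGraph.edge_adj, Matrix.add_apply, single_apply]
  by_cases h₁ : i = a ∧ j = b
  · simp [h₁, hab]
  · by_cases h₂ : i = b ∧ j = a
    · simp [h₂, hab, hab.symm]
    · grind

lemma dotProduct_adjMat_edge_mulVec {a b : Fin n} (hab : a ≠ b) (z : Fin n → ℝ) :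
    z ⬝ᵥ adjMat (SimpleGraph.edge a b) *ᵥ z = 2 * z a * z b := by
  simp only [adjMat_edge hab, add_mulVec, single_mulVec_eq, dotProduct_add, dotProduct_smul,
    dotProduct_single, smul_eq_mul]
  ring

lemma adjMat_rotate {T : SimpleGraph (Fin n)} {u v w : Fin n}
    (huv : u ≠ v) (hvw : T.Adj v w) (huw : u ≠ w) (hTuw : ¬ T.Adj u w) :
    adjMat (SimpleGraph.fromEdgeSet ((T.edgeSet \ {s(v, w)}) ∪ {s(u, w)})) =
      adjMat T - adjMat (SimpleGraph.edge v w) + adjMat (SimpleGraph.edge u w) := by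
  ext i j
  rw [Matrix.add_apply, Matrix.sub_apply]
  simp only [adjMat, SimpleGraph.edge, SimpleGraph.fromEdgeSet_adj, Set.mem_union, Set.mem_sdiff,
    Set.mem_singleton_iff, SimpleGraph.mem_edgeSet]
  by_cases h₁ : s(i, j) = s(v, w)
  · have h₂ : s(i, j) ≠ s(u, w) := by simp [h₁, huv.symm, hvw.ne]
    have hij : T.Adj i j := by rwa [← SimpleGraph.mem_edgeSet, h₁]
    simp [h₁, hij, hij.ne]
  · by_cases h₂ : s(i, j) = s(u, w)
    · have hij : ¬ T.Adj i j := by rwa [← SimpleGraph.mem_edgeSet, h₂]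
      have hne : i ≠ j := by
        rintro rfl
        exact huw (Sym2.mk_isDiag_iff.mp (h₂ ▸ Sym2.mk_isDiag_iff.mpr rfl))
      simp [h₂, hij, hne, huv, huw]
    · by_cases hij : T.Adj i j
      · simp [h₁, h₂, hij, hij.ne]
      · simp [h₁, h₂, hij]

lemma dotProduct_adjMat_rotate_mulVec {T : SimpleGraph (Fin n)} {u v w : Fin n}
    (huv : u ≠ v) (hvw : T.Adj v w) (huw : u ≠ w) (hTuw : ¬ T.Adj u w) (z : Fin n → ℝ) :
    z ⬝ᵥ adjMat (SimpleGraph.fromEdgeSet ((T.edgeSet \ {s(v, w)}) ∪ {s(u, w)})) *ᵥ z =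
      z ⬝ᵥ adjMat T *ᵥ z + 2 * z w * (z u - z v) := by
  rw [adjMat_rotate huv hvw huw hTuw, add_mulVec, sub_mulVec, dotProduct_add, dotProduct_sub,
    dotProduct_adjMat_edge_mulVec hvw.ne, dotProduct_adjMat_edge_mulVec huw]
  ring

end AdjacencyMatrix

/-- The rotation lemma: rotating the edge `vw` to `uw` strictly increases
`α λ₁ + (1 - α) λ₂` under the stated eigenvector condition. -/
theorem rotation_alpha {n : ℕ} (T : SimpleGraph (Fin n)) (hT : T.IsTree)
    (α : ℝ) (hα : 1 / 2 ≤ α) (hα1 : α ≤ 1)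
    (x y : Fin n → ℝ)
    (hx : (adjMat T).mulVec x = lam 1 T • x) (hxunit : ∑ i, x i ^ 2 = 1)
    (hxpos : ∀ i, 0 < x i)
    (hy : (adjMat T).mulVec y = lam 2 T • y) (hyunit : ∑ i, y i ^ 2 = 1)
    (u v w : Fin n) (huv : T.Adj u v) (hvw : T.Adj v w) (huw : u ≠ w)
    (hcond : α * x w * (x u - x v) + (1 - α) * y w * (y u - y v) > 0) :
    α * lam 1 (SimpleGraph.fromEdgeSet ((T.edgeSet \ {s(v, w)}) ∪ {s(u, w)})) +
      (1 - α) * lam 2 (SimpleGraph.fromEdgeSet ((T.edgeSet \ {s(v, w)}) ∪ {s(u, w)})) >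
    α * lam 1 T + (1 - α) * lam 2 T := by
  set T' := SimpleGraph.fromEdgeSet ((T.edgeSet \ {s(v, w)}) ∪ {s(u, w)})
  have hn : 2 ≤ n := by
    have := Fin.val_ne_of_ne huv.ne
    omega
  have hxx : x ⬝ᵥ x = 1 := by simpa [dotProduct, sq] using hxunit
  have hyy : y ⬝ᵥ y = 1 := by simpa [dotProduct, sq] using hyunit
  have hxy : x ⬝ᵥ y = 0 := (adjMat_isHermitian T).dotProduct_eq_zero_of_mulVec_eq_smul hx hy
    (lam_two_lt_lam_one hT.connected hn hx hxpos).ne'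
  obtain ⟨i₀, -, -, h₀, -, h₂⟩ := exists_eigenvalues_eq_lam T' hn
  have hT' := (adjMat_isHermitian T').weighted_dotProduct_mulVec_le hα hα1 h₂
    (h₀ ▸ lam_two_le_lam_one T' hn) hxx hyy hxy
  have hquad := dotProduct_adjMat_rotate_mulVec huv.ne hvw huw
    (hT.isAcyclic.not_adj_of_adj_of_adj huv hvw)
  rw [h₀, hquad, hquad, hx, hy, dotProduct_smul, dotProduct_smul, smul_eq_mul, smul_eq_mul, hxx,
    hyy] at hT'
  linarith
end
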